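/- For every β > 0 and γ > 0, the Maxwellian M_β is an equilibrium of the Boltzmann collision integral: for every v ∈ ℝ³ the integral defining C(M_β)(v) converges absolutely and C(M_β)(v) = 0. -/

import Mathlib

/-!
An elastic collision conserves the kinetic energy `|v|² + |v⋆|²`, and `M_β(v) M_β(v⋆)` is a
function of that energy alone, so the gain term cancels the loss term pointwise: the integrand of
`C(M_β)(v)` vanishes identically.
-/

open MeasureTheory Real

noncomputable section

abbrev R3 : Type := EuclideanSpace ℝ (Fin 3)

abbrev S2 : Type := Metric.sphere (0 : R3) 1

/-- Euclidean inner product on ℝ³. -/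
noncomputable def dotp (x y : R3) : ℝ := inner ℝ x y

/-- The surface measure on the unit sphere `S² ⊂ ℝ³`. -/
noncomputable def sphMeasure : Measure S2 := (volume : Measure R3).toSphere

/-- Lebesgue measure ⊗ surface measure on `ℝ³ × S²`. -/
noncomputable def prodMeas : Measure (R3 × S2) := (volume : Measure R3).prod sphMeasure

/-- The Maxwellian `M_β(v) = (β/(2π))^{3/2} exp(-β|v|²/2)`. -/
noncomputable def Mb (β : ℝ) (v : R3) : ℝ :=
  (β / (2 * π)) ^ ((3 : ℝ) / 2) * exp (-β * ‖v‖ ^ 2 / 2)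

/-- Post-collision velocity `v' = v - ((v - v⋆)·n) n`. -/
noncomputable def vPost (v w : R3) (n : S2) : R3 := v - dotp (v - w) (n : R3) • (n : R3)

/-- Post-collision velocity `v⋆' = v⋆ + ((v - v⋆)·n) n`. -/
noncomputable def wPost (v w : R3) (n : S2) : R3 := w + dotp (v - w) (n : R3) • (n : R3)

/-- The hard-sphere collision kernel `((v - v⋆)·n)₊`. -/
noncomputable def collKer (v w : R3) (n : S2) : ℝ := max (dotp (v - w) (n : R3)) 0

/-- The integrand of the Boltzmann collision integral `C(g)(v)`. -/
noncomputable def CbInt (g : R3 → ℝ) (v : R3) : R3 × S2 → ℝ :=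
  fun p => (g (vPost v p.1 p.2) * g (wPost v p.1 p.2) - g v * g p.1) * collKer v p.1 p.2

/-- The Boltzmann collision integral
`C(g)(v) = γ ∫ (g(v')g(v⋆') - g(v)g(v⋆)) ((v-v⋆)·n)₊ dv⋆ dn`. -/
noncomputable def Cb (γ : ℝ) (g : R3 → ℝ) (v : R3) : ℝ := γ * ∫ p, CbInt g v p ∂prodMeas

theorem norm_sub_inner_smul_sq_add_norm_add_inner_smul_sq {E : Type*} [NormedAddCommGroup E]
    [InnerProductSpace ℝ E] {n : E} (hn : ‖n‖ = 1) (v w : E) :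
    ‖v - inner ℝ (v - w) n • n‖ ^ 2 + ‖w + inner ℝ (v - w) n • n‖ ^ 2 = ‖v‖ ^ 2 + ‖w‖ ^ 2 := by
  set c := inner ℝ (v - w) n
  have hcn : ‖c • n‖ ^ 2 = c ^ 2 := by simp [norm_smul, hn]
  have hc : c = inner ℝ v n - inner ℝ w n := inner_sub_left v w n
  rw [norm_sub_sq_real, norm_add_sq_real, real_inner_smul_right, real_inner_smul_right, hcn, hc]
  ring

theorem norm_vPost_sq_add_norm_wPost_sq (v w : R3) (n : S2) :
    ‖vPost v w n‖ ^ 2 + ‖wPost v w n‖ ^ 2 = ‖v‖ ^ 2 + ‖w‖ ^ 2 :=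
  norm_sub_inner_smul_sq_add_norm_add_inner_smul_sq (mem_sphere_zero_iff_norm.mp n.2) v w

theorem Mb_mul_Mb_eq_of_energy_eq (β : ℝ) {v w v' w' : R3}
    (h : ‖v'‖ ^ 2 + ‖w'‖ ^ 2 = ‖v‖ ^ 2 + ‖w‖ ^ 2) : Mb β v' * Mb β w' = Mb β v * Mb β w := by
  simp only [Mb]
  rw [mul_mul_mul_comm, ← exp_add, mul_mul_mul_comm _ (exp _), ← exp_add]
  congr 2
  linear_combination (-β / 2) * h

theorem Mb_vPost_mul_Mb_wPost (β : ℝ) (v w : R3) (n : S2) :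
    Mb β (vPost v w n) * Mb β (wPost v w n) = Mb β v * Mb β w :=
  Mb_mul_Mb_eq_of_energy_eq β (norm_vPost_sq_add_norm_wPost_sq v w n)

theorem CbInt_Mb (β : ℝ) (v : R3) : CbInt (Mb β) v = 0 := by
  funext p
  simp only [CbInt, Mb_vPost_mul_Mb_wPost, sub_self, zero_mul, Pi.zero_apply]

theorem maxwellian_collision_equilibrium_general (β γ : ℝ) (v : R3) :
    Integrable (CbInt (Mb β) v) prodMeas ∧ Cb γ (Mb β) v = 0 := by
  rw [Cb, CbInt_Mb]
  exact ⟨integrable_zero _ _ _, by simp⟩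

/-- The Maxwellian is an equilibrium of the Boltzmann collision integral: for every `v` the
integral defining `C(M_β)(v)` converges absolutely and `C(M_β)(v) = 0`. -/
theorem maxwellian_collision_equilibrium (β γ : ℝ) (hβ : 0 < β) (hγ : 0 < γ) (v : R3) :
    Integrable (CbInt (Mb β) v) prodMeas ∧ Cb γ (Mb β) v = 0 :=
  maxwellian_collision_equilibrium_general β γ v
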